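/- The third Cartesian component of the induction equation holds for the explicit fields: for every μ ≥ 0 and all t ∈ [0,T*), x ∈ ℝ³, ∂_t H̄₃(t,x) = μ ΔH̄₃(t,x) + Σ_{i=1}^{3} H̄ᵢ(t,x) ∂_{x_i}v̄₃(t,x) − Σ_{i=1}^{3} v̄ᵢ(t,x) ∂_{x_i}H̄₃(t,x). -/

import Mathlib

/-- Partial derivative of `f : ℝ³ → ℝ` in the `j`-th coordinate direction at `x`. -/
noncomputable def pd (f : (Fin 3 → ℝ) → ℝ) (j : Fin 3) (x : Fin 3 → ℝ) : ℝ :=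
  deriv (fun s => f (Function.update x j s)) (x j)

/-- Laplacian of `f : ℝ³ → ℝ` at `x`. -/
noncomputable def lap (f : (Fin 3 → ℝ) → ℝ) (x : Fin 3 → ℝ) : ℝ :=
  ∑ j : Fin 3, pd (fun y => pd f j y) j x

/-- The explicit blowup velocity field `v̄`. -/
noncomputable def vbar (T a k : ℝ) (t : ℝ) (x : Fin 3 → ℝ) : Fin 3 → ℝ :=
  ![a * x 0 / (T - t) + k * x 1 * (T - t) ^ (2 * a),
    a * x 1 / (T - t) - k * x 0 * (T - t) ^ (2 * a),
    -2 * a * x 2 / (T - t)]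

/-- The explicit blowup magnetic field `H̄`. -/
noncomputable def Hbar (T a ab k : ℝ) (t : ℝ) (x : Fin 3 → ℝ) : Fin 3 → ℝ :=
  ![ab * x 0 + 2 * ab * k * x 1 * x 2 * (T - t) ^ (2 * a + 1) / (4 * a + 1),
    ab * x 1 - 2 * ab * k * x 0 * x 2 * (T - t) ^ (2 * a + 1) / (4 * a + 1),
    -2 * ab * x 2]

/-! The third components `H̄₃ = -2 ā x₃` and `v̄₃ = -2a x₃ / (T* - t)` are both multiples of `x₃`
alone, and `H̄₃` does not depend on `t`. Hence `∂ₜH̄₃ = 0` and `ΔH̄₃ = 0`, while the stretching and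
transport terms both equal `H̄₃ ∂₃v̄₃ = v̄₃ ∂₃H̄₃ = 4aā x₃ / (T* - t)` and cancel. -/

theorem pd_const (c : ℝ) (i : Fin 3) (x : Fin 3 → ℝ) : pd (fun _ => c) i x = 0 :=
  deriv_const _ c

theorem pd_const_mul_apply (c : ℝ) (i j : Fin 3) (x : Fin 3 → ℝ) :
    pd (fun y => c * y j) i x = if i = j then c else 0 := by
  unfold pd
  split_ifs with h
  · subst h
    simp
  · simp [Function.update_of_ne (Ne.symm h)]

theorem lap_const_mul_apply (c : ℝ) (j : Fin 3) (x : Fin 3 → ℝ) :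
    lap (fun y => c * y j) x = 0 := by
  simp only [lap, pd_const_mul_apply, pd_const, Finset.sum_const_zero]

theorem sum_mul_pd_const_mul_apply (u : Fin 3 → ℝ) (c : ℝ) (j : Fin 3) (x : Fin 3 → ℝ) :
    ∑ i : Fin 3, u i * pd (fun y => c * y j) i x = u j * c := by
  simp [pd_const_mul_apply]

theorem Hbar_two (T a ab k t : ℝ) (x : Fin 3 → ℝ) : Hbar T a ab k t x 2 = -2 * ab * x 2 := rfl

theorem vbar_two (T a k t : ℝ) (x : Fin 3 → ℝ) : vbar T a k t x 2 = -2 * a / (T - t) * x 2 :=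
  mul_div_right_comm _ _ _

theorem third_induction_component_general (T a ab k : ℝ) :
    ∀ μ : ℝ, 0 ≤ μ →
    ∀ t ∈ Set.Ico (0 : ℝ) T, ∀ x : Fin 3 → ℝ,
      deriv (fun s => Hbar T a ab k s x 2) t
        = μ * lap (fun y => Hbar T a ab k t y 2) x
          + (∑ i : Fin 3, Hbar T a ab k t x i * pd (fun y => vbar T a k t y 2) i x)
          - (∑ i : Fin 3, vbar T a k t x i * pd (fun y => Hbar T a ab k t y 2) i x) := by
  intro μ _ t _ x
  simp only [Hbar_two, vbar_two, deriv_const, lap_const_mul_apply, sum_mul_pd_const_mul_apply]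
  ring

/-- the third Cartesian component of the induction equation holds
for the explicit fields. -/
theorem third_induction_component (T a ab k : ℝ) (hT : 0 < T)
    (hk : k ≠ 0) (hab : ab ≠ 0) (ha : a ≠ 0) (ha' : a ≠ -(1 / 4)) :
    ∀ μ : ℝ, 0 ≤ μ →
    ∀ t ∈ Set.Ico (0 : ℝ) T, ∀ x : Fin 3 → ℝ,
      deriv (fun s => Hbar T a ab k s x 2) t
        = μ * lap (fun y => Hbar T a ab k t y 2) x
          + (∑ i : Fin 3, Hbar T a ab k t x i * pd (fun y => vbar T a k t y 2) i x)
          - (∑ i : Fin 3, vbar T a k t x i * pd (fun y => Hbar T a ab k t y 2) i x) :=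
  third_induction_component_general T a ab k
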